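/- arXiv:1412.7833 — 3 statements merged into one kernel-verified Lean document; each statement's English description precedes it below -/
import Mathlib

section
/- Let m ≥ 3 and let U ⊆ ℂ be open with 0 ∈ U. Let f̃ : U → Mat(2×(2m−4), ℂ) be a function, and suppose f : U → Mat(2×(2m−4), ℂ) and g : U → Mat(2×2, ℂ) are complex-differentiable on U with f(0) = 0, g(0) = 0, f′ = f̃, and g′ = −f·f̃^♯. For λ ∈ ℂ \ {0} define the 2m×2m-matrix-valued function H_λ := I_{2m} + λ⁻¹H₁ + λ⁻²H₂, where with respect to the block splitting 2m = 2 + (2m−4) + 2, H₁ = ((0, f, 0), (0, 0, −f^♯), (0, 0, 0)) and H₂ = ((0, 0, g), (0, 0, 0), (0, 0, 0)). Then for every λ ≠ 0: H_λ(0) = I_{2m} and H_λ is complex-differentiable on U with H_λ′ = H_λ · (λ⁻¹ η̃₋₁), where η̃₋₁ = ((0, f̃, 0), (0, 0, −f̃^♯), (0, 0, 0)). -/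
/-! Write `T(X)` for `triMat m X` and `C(Y)` for `cornerMat m Y`, so that
`H_λ = 1 + λ⁻¹ T(f) + λ⁻² C(g)`. Block multiplication gives `T(X) T(X') = C(-X X'^♯)` and
`C(Y) T(X) = 0`, hence `H_λ · λ⁻¹ T(f̃) = λ⁻¹ T(f̃) + λ⁻² C(-f f̃^♯)`. Since `T` and `C` merely place
(signed) entries of their argument, this is the entrywise derivative of `H_λ` given `f′ = f̃` and
`g′ = -f f̃^♯`. -/

open Matrix

noncomputable section

/-- `J_k`: the k×k matrix with ones on the antidiagonal. -/
def Jmat (k : ℕ) : Matrix (Fin k) (Fin k) ℂ :=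
  fun i j => if (i : ℕ) + (j : ℕ) = k - 1 then 1 else 0

/-- `X^♯ = J_k Xᵗ J₂` for a 2×k matrix `X`. -/
def sharp (k : ℕ) (X : Matrix (Fin 2) (Fin k) ℂ) : Matrix (Fin k) (Fin 2) ℂ :=
  Jmat k * Xᵀ * Jmat 2

/-- The 2m×2m matrix `((0, f, 0), (0, 0, −f^♯), (0, 0, 0))` w.r.t. the splitting
`2m = 2 + (2m−4) + 2`. -/
def triMat (m : ℕ) (f : Matrix (Fin 2) (Fin (2 * m - 4)) ℂ) :
    Matrix (Fin (2 * m)) (Fin (2 * m)) ℂ := fun i j =>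
  if hi : (i : ℕ) < 2 then
    if hj1 : (j : ℕ) < 2 then 0
    else if hj : (j : ℕ) < 2 * m - 2 then
      f ⟨(i : ℕ), hi⟩ ⟨(j : ℕ) - 2, by have := j.isLt; omega⟩
    else 0
  else if hi2 : (i : ℕ) < 2 * m - 2 then
    if hj : (j : ℕ) < 2 * m - 2 then 0
    else
      -(sharp (2 * m - 4) f ⟨(i : ℕ) - 2, by have := i.isLt; omega⟩
          ⟨(j : ℕ) - (2 * m - 2), by have := j.isLt; omega⟩)
  else 0

/-- The 2m×2m matrix `((0, 0, g), (0, 0, 0), (0, 0, 0))` w.r.t. the splitting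
`2m = 2 + (2m−4) + 2`. -/
def cornerMat (m : ℕ) (g : Matrix (Fin 2) (Fin 2) ℂ) :
    Matrix (Fin (2 * m)) (Fin (2 * m)) ℂ := fun i j =>
  if hi : (i : ℕ) < 2 then
    if hj : 2 * m - 2 ≤ (j : ℕ) then
      g ⟨(i : ℕ), hi⟩ ⟨(j : ℕ) - (2 * m - 2), by have := j.isLt; omega⟩
    else 0
  else 0

lemma Jmat_apply (k : ℕ) (i j : Fin k) : Jmat k i j = if i.rev = j then 1 else 0 := by
  simp only [Jmat, Fin.ext_iff, Fin.val_rev]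
  congr 1
  apply propext
  omega

lemma Jmat_mul_apply {n : Type*} [Fintype n] (k : ℕ) (A : Matrix (Fin k) n ℂ) (i : Fin k)
    (j : n) :
    (Jmat k * A) i j = A i.rev j := by
  simp [mul_apply, Jmat_apply]

lemma mul_Jmat_apply {n : Type*} [Fintype n] (k : ℕ) (A : Matrix n (Fin k) ℂ) (i : n)
    (j : Fin k) :
    (A * Jmat k) i j = A i j.rev := by
  simp [mul_apply, Jmat_apply, Fin.rev_eq_iff]

lemma sharp_apply (k : ℕ) (X : Matrix (Fin 2) (Fin k) ℂ) (i : Fin k) (j : Fin 2) :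
    sharp k X i j = X j.rev i.rev := by
  rw [sharp, mul_Jmat_apply, Jmat_mul_apply, transpose_apply]

section Blocks

variable {m : ℕ}

@[simp]
lemma triMat_zero : triMat m 0 = 0 := by
  ext i j
  simp only [triMat, sharp, transpose_zero, Matrix.mul_zero, Matrix.zero_mul]
  split_ifs <;> simp

@[simp]
lemma cornerMat_zero : cornerMat m 0 = 0 := by
  ext i j
  simp only [cornerMat]
  split_ifs <;> rfl

lemma hasDerivAt_triMat_apply {f : ℂ → Matrix (Fin 2) (Fin (2 * m - 4)) ℂ}
    {f' : Matrix (Fin 2) (Fin (2 * m - 4)) ℂ} {z : ℂ}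
    (hf : ∀ a b, HasDerivAt (fun w => f w a b) (f' a b) z) (i j : Fin (2 * m)) :
    HasDerivAt (fun w => triMat m (f w) i j) (triMat m f' i j) z := by
  simp only [triMat, sharp_apply]
  split_ifs
  exacts [hasDerivAt_const _ _, hf _ _, hasDerivAt_const _ _, hasDerivAt_const _ _,
    (hf _ _).neg, hasDerivAt_const _ _]

lemma hasDerivAt_cornerMat_apply {g : ℂ → Matrix (Fin 2) (Fin 2) ℂ}
    {g' : Matrix (Fin 2) (Fin 2) ℂ} {z : ℂ}
    (hg : ∀ a b, HasDerivAt (fun w => g w a b) (g' a b) z) (i j : Fin (2 * m)) :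
    HasDerivAt (fun w => cornerMat m (g w) i j) (cornerMat m g' i j) z := by
  simp only [cornerMat]
  split_ifs
  exacts [hg _ _, hasDerivAt_const _ _, hasDerivAt_const _ _]

lemma cornerMat_mul_triMat (g : Matrix (Fin 2) (Fin 2) ℂ)
    (f : Matrix (Fin 2) (Fin (2 * m - 4)) ℂ) : cornerMat m g * triMat m f = 0 := by
  ext i j
  rw [mul_apply]
  refine Finset.sum_eq_zero fun l _ => ?_
  simp only [cornerMat, triMat]
  split_ifs <;> first | omega | simp

lemma triMat_mul_triMat (f f' : Matrix (Fin 2) (Fin (2 * m - 4)) ℂ) :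
    triMat m f * triMat m f' = cornerMat m (-(f * sharp (2 * m - 4) f')) := by
  ext i j
  rw [mul_apply]
  by_cases hij : (i : ℕ) < 2 ∧ 2 * m - 2 ≤ j
  · obtain ⟨hi, hj⟩ := hij
    rw [cornerMat, dif_pos hi, dif_pos hj, neg_apply, mul_apply, ← Finset.sum_neg_distrib]
    refine (Fintype.sum_of_injective (fun l => ⟨l + 2, by omega⟩) ?_ _ _ ?_ ?_).symm
    · intro a b h
      exact Fin.ext (by simpa using h)
    · intro l hl
      have hl' : (l : ℕ) < 2 ∨ 2 * m - 2 ≤ l := by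
        by_contra! h
        exact hl ⟨⟨l - 2, by omega⟩, Fin.ext (by simp; omega)⟩
      simp only [triMat]
      split_ifs <;> first | omega | simp
    · intro l
      have h1 : ¬ (l : ℕ) + 2 < 2 := by omega
      have h2 : (l : ℕ) + 2 < 2 * m - 2 := by omega
      have h3 : ¬ (j : ℕ) < 2 * m - 2 := by omega
      simp only [triMat, dif_pos hi, dif_neg h1, dif_pos h2, dif_neg h3, mul_neg]
      rfl
  · have hC : cornerMat m (-(f * sharp (2 * m - 4) f')) i j = 0 := by
      simp only [cornerMat]
      split_ifs <;> first | omega | rfl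
    rw [hC]
    refine Finset.sum_eq_zero fun l _ => ?_
    simp only [triMat]
    split_ifs <;> first | omega | simp

end Blocks

lemma one_add_smul_triMat_add_smul_cornerMat_mul {m : ℕ} (c : ℂ)
    (f f' : Matrix (Fin 2) (Fin (2 * m - 4)) ℂ) (g : Matrix (Fin 2) (Fin 2) ℂ) :
    (1 + c • triMat m f + c ^ 2 • cornerMat m g) * (c • triMat m f') =
      c • triMat m f' + c ^ 2 • cornerMat m (-(f * sharp (2 * m - 4) f')) := by
  rw [add_mul, add_mul, one_mul, smul_mul_smul_comm, smul_mul_smul_comm, triMat_mul_triMat,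
    cornerMat_mul_triMat, smul_zero, add_zero, sq]

theorem stmt6_general (m : ℕ) (U : Set ℂ)
    (ftilde f : ℂ → Matrix (Fin 2) (Fin (2 * m - 4)) ℂ)
    (g : ℂ → Matrix (Fin 2) (Fin 2) ℂ)
    (hf0 : f 0 = 0) (hg0 : g 0 = 0)
    (hf : ∀ z ∈ U, ∀ i j, HasDerivAt (fun w => f w i j) (ftilde z i j) z)
    (hg : ∀ z ∈ U, ∀ i j,
      HasDerivAt (fun w => g w i j) ((-(f z * sharp (2 * m - 4) (ftilde z))) i j) z) :
    ∀ lam : ℂ, lam ≠ 0 →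
      ((1 : Matrix (Fin (2 * m)) (Fin (2 * m)) ℂ) + lam⁻¹ • triMat m (f 0) +
          (lam ^ 2)⁻¹ • cornerMat m (g 0) = 1) ∧
      ∀ z ∈ U, ∀ i j : Fin (2 * m),
        HasDerivAt
          (fun w => ((1 : Matrix (Fin (2 * m)) (Fin (2 * m)) ℂ) + lam⁻¹ • triMat m (f w) +
            (lam ^ 2)⁻¹ • cornerMat m (g w)) i j)
          ((((1 : Matrix (Fin (2 * m)) (Fin (2 * m)) ℂ) + lam⁻¹ • triMat m (f z) +
              (lam ^ 2)⁻¹ • cornerMat m (g z)) *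
            (lam⁻¹ • triMat m (ftilde z))) i j) z := by
  intro lam _
  refine ⟨by simp only [hf0, hg0, triMat_zero, cornerMat_zero, smul_zero, add_zero],
    fun z hz i j => ?_⟩
  rw [← inv_pow, one_add_smul_triMat_add_smul_cornerMat_mul]
  have hT := hasDerivAt_triMat_apply (hf z hz) i j
  have hC := hasDerivAt_cornerMat_apply (hg z hz) i j
  simpa only [Matrix.add_apply, Matrix.smul_apply, Pi.add_apply, smul_eq_mul, add_assoc] using
    ((hT.const_mul lam⁻¹).add (hC.const_mul (lam⁻¹ ^ 2))).const_add
      ((1 : Matrix (Fin (2 * m)) (Fin (2 * m)) ℂ) i j)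

/-- the loop `H_λ = I + λ⁻¹H₁ + λ⁻²H₂` built from `f, g` satisfies `H_λ(0) = I`
and solves `H_λ′ = H_λ · (λ⁻¹ η̃₋₁)` on `U`, where `η̃₋₁ = ((0, f̃, 0), (0, 0, −f̃^♯), (0, 0, 0))`. -/
theorem stmt6 (m : ℕ) (hm : 3 ≤ m) (U : Set ℂ) (hU : IsOpen U) (h0U : (0 : ℂ) ∈ U)
    (ftilde f : ℂ → Matrix (Fin 2) (Fin (2 * m - 4)) ℂ)
    (g : ℂ → Matrix (Fin 2) (Fin 2) ℂ)
    (hf0 : f 0 = 0) (hg0 : g 0 = 0)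
    (hf : ∀ z ∈ U, ∀ i j, HasDerivAt (fun w => f w i j) (ftilde z i j) z)
    (hg : ∀ z ∈ U, ∀ i j,
      HasDerivAt (fun w => g w i j) ((-(f z * sharp (2 * m - 4) (ftilde z))) i j) z) :
    ∀ lam : ℂ, lam ≠ 0 →
      ((1 : Matrix (Fin (2 * m)) (Fin (2 * m)) ℂ) + lam⁻¹ • triMat m (f 0) +
          (lam ^ 2)⁻¹ • cornerMat m (g 0) = 1) ∧
      ∀ z ∈ U, ∀ i j : Fin (2 * m),
        HasDerivAt
          (fun w => ((1 : Matrix (Fin (2 * m)) (Fin (2 * m)) ℂ) + lam⁻¹ • triMat m (f w) +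
            (lam ^ 2)⁻¹ • cornerMat m (g w)) i j)
          ((((1 : Matrix (Fin (2 * m)) (Fin (2 * m)) ℂ) + lam⁻¹ • triMat m (f z) +
              (lam ^ 2)⁻¹ • cornerMat m (g z)) *
            (lam⁻¹ • triMat m (ftilde z))) i j) z :=
  stmt6_general m U ftilde f g hf0 hg0 hf hg
end
end

section
/- Let n ≥ 1 and let v₁, …, vₙ ∈ ℂ⁴ be vectors whose second coordinate is 0. Then vⱼᵗ I_{1,3} v_l = 0 for all 1 ≤ j, l ≤ n if and only if there exist a vector w ∈ ℂ⁴ and scalars h₁, …, hₙ ∈ ℂ with vⱼ = hⱼ·w for all j, where w is either of the form (2ih₀, 0, 1 − h₀², i(1 + h₀²)) for some h₀ ∈ ℂ or equals (0, 0, 1, −i). -/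
open Matrix

noncomputable section

/-- `I_{1,3} = diag(−1,1,1,1)`. -/
def I13 : Matrix (Fin 4) (Fin 4) ℂ :=
  !![-1, 0, 0, 0;
     0, 1, 0, 0;
     0, 0, 1, 0;
     0, 0, 0, 1]

/-- The bilinear form `(v, w) ↦ vᵗ I_{1,3} w` on `ℂ⁴`. -/
def bform (v w : Fin 4 → ℂ) : ℂ := v ⬝ᵥ I13.mulVec w


/-!
Once `v 1 = 0`, `bform` is the nondegenerate ternary form `-a² + b² + c²`, whose isotropic cone is
the union of the lines through `nullDir s = (2is, 0, 1 - s², i(1 + s²))` and `nullDirInf`.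
In the null coordinate `q = b - ic`, an isotropic `x` orthogonal to `nullDir s` satisfies
`(a - isq)² = q · bform (nullDir s) x - bform x x = 0`, which forces `x = (q / 2) • nullDir s`;
so a totally isotropic family is contained in the isotropic line through any nonzero member.
-/

open Complex

lemma bform_apply (x y : Fin 4 → ℂ) :
    bform x y = -(x 0 * y 0) + x 1 * y 1 + x 2 * y 2 + x 3 * y 3 := by
  simp [bform, I13, mulVec, dotProduct, Fin.sum_univ_four]

lemma bform_smul_left (t : ℂ) (x y : Fin 4 → ℂ) : bform (t • x) y = t * bform x y := by
  simp only [bform, smul_dotProduct, smul_eq_mul]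

lemma bform_smul_right (t : ℂ) (x y : Fin 4 → ℂ) : bform x (t • y) = t * bform x y := by
  simp only [bform, mulVec_smul, dotProduct_smul, smul_eq_mul]

lemma fin4_ext {x y : Fin 4 → ℂ} (h0 : x 0 = y 0) (h1 : x 1 = y 1) (h2 : x 2 = y 2)
    (h3 : x 3 = y 3) : x = y := by
  funext i
  fin_cases i <;> assumption

def nullDir (s : ℂ) : Fin 4 → ℂ := ![2 * I * s, 0, 1 - s ^ 2, I * (1 + s ^ 2)]

def nullDirInf : Fin 4 → ℂ := ![0, 0, 1, -I]

def IsNullDirection (w : Fin 4 → ℂ) : Prop := (∃ s, w = nullDir s) ∨ w = nullDirInf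

lemma IsNullDirection.bform_self {w : Fin 4 → ℂ} (hw : IsNullDirection w) : bform w w = 0 := by
  rcases hw with ⟨s, rfl⟩ | rfl
  · simp only [bform_apply, nullDir, cons_val_zero, cons_val_one, cons_val, mul_zero, add_zero]
    linear_combination (1 - s ^ 2) ^ 2 * I_sq
  · simp [bform_apply, nullDirInf]

lemma eq_smul_nullDir_of_bform_eq_zero {x : Fin 4 → ℂ} (s : ℂ) (hx1 : x 1 = 0)
    (hxx : bform x x = 0) (hwx : bform (nullDir s) x = 0) :
    x = ((x 2 - I * x 3) / 2) • nullDir s := by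
  simp only [bform_apply, nullDir, hx1, cons_val_zero, cons_val_one, cons_val, mul_zero,
    add_zero] at hxx hwx
  set q := x 2 - I * x 3
  have ha : x 0 = I * s * q := by
    have hsq : (x 0 - I * s * q) ^ 2 = 0 := by
      linear_combination q * hwx - hxx + (s ^ 2 * q ^ 2 + x 3 ^ 2) * I_sq
    exact sub_eq_zero.mp (pow_eq_zero_iff two_ne_zero |>.mp hsq)
  apply fin4_ext <;>
    simp only [nullDir, hx1, Pi.smul_apply, smul_eq_mul, cons_val_zero, cons_val_one, cons_val,
      mul_zero]
  · linear_combination ha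
  · linear_combination (1 / 2) * hwx + I * s * ha + s ^ 2 * q * I_sq
  · linear_combination (-I / 2) * hwx + s * ha + (x 3 - s * x 0) * I_sq

lemma eq_smul_nullDirInf_of_bform_eq_zero {x : Fin 4 → ℂ} (hx1 : x 1 = 0)
    (hxx : bform x x = 0) (hwx : bform nullDirInf x = 0) :
    x = x 2 • nullDirInf := by
  simp only [bform_apply, nullDirInf, hx1, cons_val_zero, cons_val_one, cons_val, mul_zero,
    add_zero, zero_mul, neg_zero, zero_add, one_mul, neg_mul] at hxx hwx
  have ha : x 0 ^ 2 = 0 := by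
    linear_combination -hxx + (x 2 + I * x 3) * hwx + x 3 ^ 2 * I_sq
  apply fin4_ext <;>
    simp only [nullDirInf, hx1, Pi.smul_apply, smul_eq_mul, cons_val_zero, cons_val_one, cons_val,
      mul_zero, mul_one, mul_neg]
  · exact pow_eq_zero_iff two_ne_zero |>.mp ha
  · linear_combination I * hwx + x 3 * I_sq

lemma IsNullDirection.exists_eq_smul {w x : Fin 4 → ℂ} (hw : IsNullDirection w)
    (hx1 : x 1 = 0) (hxx : bform x x = 0) (hwx : bform w x = 0) : ∃ t : ℂ, x = t • w := by
  rcases hw with ⟨s, rfl⟩ | rfl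
  · exact ⟨_, eq_smul_nullDir_of_bform_eq_zero s hx1 hxx hwx⟩
  · exact ⟨_, eq_smul_nullDirInf_of_bform_eq_zero hx1 hxx hwx⟩

lemma exists_isNullDirection_bform_eq_zero {x : Fin 4 → ℂ} (hx1 : x 1 = 0)
    (hxx : bform x x = 0) : ∃ w, IsNullDirection w ∧ bform w x = 0 := by
  by_cases hq : x 2 - I * x 3 = 0
  · refine ⟨nullDirInf, Or.inr rfl, ?_⟩
    simp only [bform_apply, nullDirInf, hx1, cons_val_zero, cons_val_one, cons_val, mul_zero,
      add_zero, zero_mul, neg_zero, zero_add, one_mul]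
    linear_combination hq
  · -- `s` is the double root of the quadratic `s ↦ bform (nullDir s) x`
    refine ⟨nullDir (-I * x 0 / (x 2 - I * x 3)), Or.inl ⟨_, rfl⟩, ?_⟩
    simp only [bform_apply, nullDir, hx1, cons_val_zero, cons_val_one, cons_val, mul_zero,
      add_zero] at hxx ⊢
    field_simp
    linear_combination (x 2 - I * x 3) * hxx + (x 2 - I * x 3) * (x 0 ^ 2 - x 3 ^ 2) * I_sq

theorem stmt11_general (n : ℕ) (v : Fin n → (Fin 4 → ℂ)) (hv : ∀ j, v j 1 = 0) :
    (∀ j l, bform (v j) (v l) = 0) ↔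
      ∃ (w : Fin 4 → ℂ) (h : Fin n → ℂ),
        (∀ j, v j = h j • w) ∧
        ((∃ h0 : ℂ, w = ![2 * Complex.I * h0, 0, 1 - h0 ^ 2, Complex.I * (1 + h0 ^ 2)]) ∨
          w = ![0, 0, 1, -Complex.I]) := by
  constructor
  · intro hiso
    by_cases hzero : ∀ j, v j = 0
    · exact ⟨nullDirInf, 0, fun j => by simp [hzero j], Or.inr rfl⟩
    obtain ⟨j₀, hj₀⟩ := not_forall.mp hzero
    obtain ⟨w, hw, hwv⟩ := exists_isNullDirection_bform_eq_zero (hv j₀) (hiso j₀ j₀)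
    obtain ⟨t, ht⟩ := hw.exists_eq_smul (hv j₀) (hiso j₀ j₀) hwv
    have ht0 : t ≠ 0 := by rintro rfl; exact hj₀ (by simpa using ht)
    have hw_orth (l : Fin n) : bform w (v l) = 0 := by
      have := hiso j₀ l
      rwa [ht, bform_smul_left, mul_eq_zero, or_iff_right ht0] at this
    choose h hh using fun l => hw.exists_eq_smul (hv l) (hiso l l) (hw_orth l)
    exact ⟨w, h, hh, hw⟩
  · rintro ⟨w, h, hvw, hw⟩ j l
    rw [hvw, hvw, bform_smul_left, bform_smul_right, IsNullDirection.bform_self hw, mul_zero,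
      mul_zero]

/-- vectors `v₁, …, vₙ ∈ ℂ⁴` with vanishing second coordinate are pairwise
isotropic for `I_{1,3}` iff they are all multiples of a single vector of the form
`(2ih₀, 0, 1 − h₀², i(1 + h₀²))` or of `(0, 0, 1, −i)`. -/
theorem stmt11 (n : ℕ) (hn : 1 ≤ n) (v : Fin n → (Fin 4 → ℂ)) (hv : ∀ j, v j 1 = 0) :
    (∀ j l, bform (v j) (v l) = 0) ↔
      ∃ (w : Fin 4 → ℂ) (h : Fin n → ℂ),
        (∀ j, v j = h j • w) ∧
        ((∃ h0 : ℂ, w = ![2 * Complex.I * h0, 0, 1 - h0 ^ 2, Complex.I * (1 + h0 ^ 2)]) ∨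
          w = ![0, 0, 1, -Complex.I]) :=
  stmt11_general n v hv
end
end

section
/- Let f₁, f₂, f₃, f₄, g₁, g₂, g₄ ∈ ℂ and set g₃ := −f₃f₄. Put f = ((f₁, f₂), (f₃, f₄)), g = ((g₁, g₂), (g₃, g₄)), f^♯ = J₂ fᵗ J₂, d := I₂ + E₄·conj(f^♯)ᵗ·f^♯ + E₄·conj(g)ᵗ·E₁·g, and u^♯ := (f^♯ − conj(f)ᵗ·E₁·g)·d⁻¹. Then I₂ + conj(f)ᵗ·E₁·f − u^♯·d·E₄·conj(u^♯)ᵗ equals the diagonal matrix diag((1+|f₃|²)/(1+|f₄|²), (1+|f₄|²)/(1+|f₃|²)). -/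
open Matrix

noncomputable section

/-- `J₂ = ((0,1),(1,0))`. -/
def J2 : Matrix (Fin 2) (Fin 2) ℂ := !![0, 1; 1, 0]

/-- `E₁ = ((0,0),(0,1))`. -/
def E1 : Matrix (Fin 2) (Fin 2) ℂ := !![0, 0; 0, 1]

/-- `E₄ = ((1,0),(0,0))`. -/
def E4 : Matrix (Fin 2) (Fin 2) ℂ := !![1, 0; 0, 0]

/-- Entrywise complex conjugation of a matrix. -/
def conjM {m n : Type*} (M : Matrix m n ℂ) : Matrix m n ℂ := M.map (starRingEnd ℂ)

/-!
Write `M^* = conj(M)ᵗ`, `a = 1 + |f₃|²`, `b = 1 + |f₄|²` and `N = f^♯ − f^* E₁ g`. The matrix `d` is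
upper triangular with `d₁₁ = 1 + |f₄|² + |f₃|² + |g₃|² = ab` (this is where `g₃ = −f₃f₄` enters), so
`d⁻¹ E₄ = (ab)⁻¹ E₄`; as `u^♯ d = N`, the subtracted term is `(ab)⁻¹ n n^*` for the first column `n`
of `N`. Again by the choice of `g₃`, `n = (a f₄, b f₃)`, and the diagonal entries become
`a − a|f₄|²/b = a/b` and its mirror image while the off-diagonal ones cancel.
-/

open ComplexConjugate

lemma ext_fin_two {α : Type*} {A B : Matrix (Fin 2) (Fin 2) α} (h₀₀ : A 0 0 = B 0 0)
    (h₀₁ : A 0 1 = B 0 1) (h₁₀ : A 1 0 = B 1 0) (h₁₁ : A 1 1 = B 1 1) : A = B := by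
  ext i j; fin_cases i <;> fin_cases j <;> assumption

lemma transpose_fin_two_of {α : Type*} (a b c d : α) : !![a, b; c, d]ᵀ = !![a, c; b, d] := by
  ext i j; fin_cases i <;> fin_cases j <;> rfl

lemma conjTranspose_fin_two_of {α : Type*} [Star α] (a b c d : α) :
    !![a, b; c, d]ᴴ = !![star a, star c; star b, star d] := by
  ext i j; fin_cases i <;> fin_cases j <;> rfl

section InverseOnEigenspace

variable {n K : Type*} [Fintype n] [DecidableEq n] [Field K]

lemma inv_mul_eq_smul_of_mul_eq_smul {d P : Matrix n n K} {c : K} (hd : IsUnit d.det)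
    (h : d * P = c • P) : d⁻¹ * P = c⁻¹ • P := by
  rcases eq_or_ne c 0 with rfl | hc
  · have hP : P = 0 := by
      rw [← nonsing_inv_mul_cancel_left d P hd, h, zero_smul, Matrix.mul_zero]
    simp [hP]
  · rw [← smul_right_inj hc, smul_smul, mul_inv_cancel₀ hc, one_smul, ← Matrix.mul_smul, ← h,
      nonsing_inv_mul_cancel_left _ _ hd]

lemma mul_inv_mul_mul_conjTranspose_of_mul_eq_smul [StarRing K] (N : Matrix n n K)
    {d P : Matrix n n K} {c : K} (hd : IsUnit d.det) (hP : Pᴴ = P) (h : d * P = c • P) :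
    N * d⁻¹ * d * P * (N * d⁻¹)ᴴ = (star c)⁻¹ • (N * P * Nᴴ) := by
  calc N * d⁻¹ * d * P * (N * d⁻¹)ᴴ = N * (d⁻¹ * P)ᴴ * Nᴴ := by
        rw [nonsing_inv_mul_cancel_right _ _ hd, conjTranspose_mul, conjTranspose_mul, hP,
          Matrix.mul_assoc, Matrix.mul_assoc, Matrix.mul_assoc]
    _ = (star c)⁻¹ • (N * P * Nᴴ) := by
        rw [inv_mul_eq_smul_of_mul_eq_smul hd h, conjTranspose_smul, hP, star_inv₀,
          Matrix.mul_smul, Matrix.smul_mul]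

end InverseOnEigenspace

lemma conjM_transpose {m n : Type*} (M : Matrix m n ℂ) : (conjM M)ᵀ = Mᴴ := rfl

lemma J2_mul_transpose_mul_J2 (a b c d : ℂ) : J2 * !![a, b; c, d]ᵀ * J2 = !![d, b; c, a] := by
  simp [J2, transpose_fin_two_of]

lemma conjTranspose_E4 : E4ᴴ = E4 := by
  simp [E4, conjTranspose_fin_two_of]

lemma E4_mul_eq (X : Matrix (Fin 2) (Fin 2) ℂ) : E4 * X = !![X 0 0, X 0 1; 0, 0] := by
  ext i j; fin_cases i <;> fin_cases j <;> simp [E4, mul_apply]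

lemma one_add_E4_mul_mul_E4 (X : Matrix (Fin 2) (Fin 2) ℂ) :
    (1 + E4 * X) * E4 = (1 + X 0 0) • E4 := by
  rw [E4_mul_eq]; ext i j; fin_cases i <;> fin_cases j <;> simp [E4, mul_apply]

lemma det_one_add_E4_mul (X : Matrix (Fin 2) (Fin 2) ℂ) : (1 + E4 * X).det = 1 + X 0 0 := by
  simp [E4_mul_eq, one_fin_two, det_fin_two_of]

lemma conjTranspose_mul_E1_mul (X Y : Matrix (Fin 2) (Fin 2) ℂ) :
    Xᴴ * E1 * Y = !![conj (X 1 0) * Y 1 0, conj (X 1 0) * Y 1 1;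
      conj (X 1 1) * Y 1 0, conj (X 1 1) * Y 1 1] := by
  rw [X.eta_fin_two, Y.eta_fin_two]; simp [E1, conjTranspose_fin_two_of]

lemma mul_E4_mul_conjTranspose (N : Matrix (Fin 2) (Fin 2) ℂ) :
    N * E4 * Nᴴ = !![N 0 0 * conj (N 0 0), N 0 0 * conj (N 1 0);
      N 1 0 * conj (N 0 0), N 1 0 * conj (N 1 0)] := by
  rw [N.eta_fin_two]; simp [E4, conjTranspose_fin_two_of]

lemma one_add_gram_apply_zero_zero (f₁ f₂ f₃ f₄ g₁ g₂ g₄ : ℂ) :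
    1 + (!![f₄, f₂; f₃, f₁]ᴴ * !![f₄, f₂; f₃, f₁] +
      !![g₁, g₂; -(f₃ * f₄), g₄]ᴴ * E1 * !![g₁, g₂; -(f₃ * f₄), g₄]) 0 0 =
      (1 + conj f₃ * f₃) * (1 + conj f₄ * f₄) := by
  rw [Matrix.add_apply, conjTranspose_mul_E1_mul]
  simp only [conjTranspose_fin_two_of, mul_fin_two, of_apply, cons_val', cons_val_zero,
    cons_val_one, RCLike.star_def, map_neg, map_mul]
  ring

lemma sharp_sub_apply_zero_zero (f₁ f₂ f₃ f₄ g₁ g₂ g₄ : ℂ) :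
    (!![f₄, f₂; f₃, f₁] - !![f₁, f₂; f₃, f₄]ᴴ * E1 * !![g₁, g₂; -(f₃ * f₄), g₄]) 0 0 =
      f₄ * (1 + conj f₃ * f₃) := by
  rw [Matrix.sub_apply, conjTranspose_mul_E1_mul]
  simp only [of_apply, cons_val', cons_val_zero, cons_val_one]
  ring

lemma sharp_sub_apply_one_zero (f₁ f₂ f₃ f₄ g₁ g₂ g₄ : ℂ) :
    (!![f₄, f₂; f₃, f₁] - !![f₁, f₂; f₃, f₄]ᴴ * E1 * !![g₁, g₂; -(f₃ * f₄), g₄]) 1 0 =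
      f₃ * (1 + conj f₄ * f₄) := by
  rw [Matrix.sub_apply, conjTranspose_mul_E1_mul]
  simp only [of_apply, cons_val', cons_val_zero, cons_val_one]
  ring

lemma one_add_gram_sub_rank_one_eq_diagonal (f₁ f₂ f₃ f₄ : ℂ) {a b : ℝ}
    (ha : (a : ℂ) = 1 + conj f₃ * f₃) (hb : (b : ℂ) = 1 + conj f₄ * f₄)
    (ha₀ : (a : ℂ) ≠ 0) (hb₀ : (b : ℂ) ≠ 0) :
    1 + !![f₁, f₂; f₃, f₄]ᴴ * E1 * !![f₁, f₂; f₃, f₄] - (star ((a : ℂ) * b))⁻¹ •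
      !![f₄ * a * conj (f₄ * a), f₄ * a * conj (f₃ * b);
        f₃ * b * conj (f₄ * a), f₃ * b * conj (f₃ * b)] =
      !![((a / b : ℝ) : ℂ), 0; 0, ((b / a : ℝ) : ℂ)] := by
  rw [conjTranspose_mul_E1_mul]
  refine ext_fin_two ?_ ?_ ?_ ?_ <;>
    simp only [Matrix.sub_apply, Matrix.add_apply, Matrix.smul_apply, one_apply_eq,
      one_apply_ne zero_ne_one, one_apply_ne one_ne_zero, of_apply, cons_val', cons_val_zero,
      cons_val_one, cons_val_fin_one, smul_eq_mul, RCLike.star_def, map_mul, Complex.conj_ofReal,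
      Complex.ofReal_div] <;>
    field_simp
  · linear_combination -(b : ℂ) * ha + a * hb
  · ring
  · ring
  · linear_combination -(a : ℂ) * hb + b * ha

/-- with `g₃ = −f₃f₄`, `d = I₂ + E₄ conj(f^♯)ᵗ f^♯ + E₄ conj(g)ᵗ E₁ g` and
`u^♯ = (f^♯ − conj(f)ᵗ E₁ g) d⁻¹`, one has
`I₂ + conj(f)ᵗ E₁ f − u^♯ d E₄ conj(u^♯)ᵗ = diag((1+|f₃|²)/(1+|f₄|²), (1+|f₄|²)/(1+|f₃|²))`. -/
theorem stmt14 (f₁ f₂ f₃ f₄ g₁ g₂ g₄ : ℂ) (g₃ : ℂ) (hg₃ : g₃ = -(f₃ * f₄))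
    (f g fsh d ush : Matrix (Fin 2) (Fin 2) ℂ)
    (hf : f = !![f₁, f₂; f₃, f₄]) (hg : g = !![g₁, g₂; g₃, g₄])
    (hfsh : fsh = J2 * fᵀ * J2)
    (hd : d = 1 + E4 * (conjM fsh)ᵀ * fsh + E4 * (conjM g)ᵀ * E1 * g)
    (hush : ush = (fsh - (conjM f)ᵀ * E1 * g) * d⁻¹) :
    1 + (conjM f)ᵀ * E1 * f - ush * d * E4 * (conjM ush)ᵀ =
      !![((((1 + ‖f₃‖ ^ 2) / (1 + ‖f₄‖ ^ 2) : ℝ)) : ℂ), 0;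
         0, ((((1 + ‖f₄‖ ^ 2) / (1 + ‖f₃‖ ^ 2) : ℝ)) : ℂ)] := by
  set a : ℝ := 1 + ‖f₃‖ ^ 2
  set b : ℝ := 1 + ‖f₄‖ ^ 2
  have ha : (a : ℂ) = 1 + conj f₃ * f₃ := by simp [a, Complex.conj_mul']
  have hb : (b : ℂ) = 1 + conj f₄ * f₄ := by simp [b, Complex.conj_mul']
  have ha₀ : (a : ℂ) ≠ 0 := Complex.ofReal_ne_zero.mpr (by positivity)
  have hb₀ : (b : ℂ) ≠ 0 := Complex.ofReal_ne_zero.mpr (by positivity)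
  subst hg₃ hf hg hfsh
  simp only [J2_mul_transpose_mul_J2, conjM_transpose] at hd hush ⊢
  have hdX : d = 1 + E4 * (!![f₄, f₂; f₃, f₁]ᴴ * !![f₄, f₂; f₃, f₁] +
      !![g₁, g₂; -(f₃ * f₄), g₄]ᴴ * E1 * !![g₁, g₂; -(f₃ * f₄), g₄]) := by
    rw [hd, Matrix.mul_add, add_assoc]
    simp only [Matrix.mul_assoc]
  have hdet : IsUnit d.det := by
    rw [hdX, det_one_add_E4_mul, one_add_gram_apply_zero_zero, ← ha, ← hb]
    exact (mul_ne_zero ha₀ hb₀).isUnit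
  have hdE4 : d * E4 = ((a : ℂ) * b) • E4 := by
    rw [hdX, one_add_E4_mul_mul_E4, one_add_gram_apply_zero_zero, ← ha, ← hb]
  rw [hush, mul_inv_mul_mul_conjTranspose_of_mul_eq_smul _ hdet conjTranspose_E4 hdE4,
    mul_E4_mul_conjTranspose, sharp_sub_apply_zero_zero, sharp_sub_apply_one_zero, ← ha, ← hb]
  exact one_add_gram_sub_rank_one_eq_diagonal f₁ f₂ f₃ f₄ ha hb ha₀ hb₀
end
end
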